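/- Let A, B be n×n W-bounded-difference integer matrices, C = A ⋆ B, let Δ ≥ 1 divide n, and define tildeC_{i',j'} := min{ A_{i',k'} + B_{k',j'} : k' ∈ {Δ, 2Δ, …, n} } for i', j' divisible by Δ. Then for all i', k', j' divisible by Δ and all (i,k,j) ∈ I(i') × I(k') × I(j'): (a) if (i,k,j) is strongly relevant, i.e., A_{i,k} + B_{k,j} = C_{i,j}, then it is approximately relevant, i.e., |A_{i',k'} + B_{k',j'} − tildeC_{i',j'}| ≤ 8ΔW; and (b) if (i,k,j) is approximately relevant, then it is weakly relevant, i.e., |A_{i,k} + B_{k,j} − C_{i,j}| ≤ 16ΔW. -/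

import Mathlib

/-- The `(min,+)`-product of two `n × n` integer matrices (indexed by `1,…,n`). -/
def minplus (n : ℕ) (hn : 1 ≤ n) (A B : ℕ → ℕ → ℤ) (i j : ℕ) : ℤ :=
  (Finset.Icc 1 n).inf' (Finset.nonempty_Icc.mpr hn) (fun k => A i k + B k j)

/-- An `n × n` integer matrix `X` is `W`-bounded-difference. -/
def BoundedDiff (n : ℕ) (W : ℤ) (X : ℕ → ℕ → ℤ) : Prop :=
  (∀ i j, 1 ≤ i → i ≤ n → 1 ≤ j → j < n → |X i j - X i (j + 1)| ≤ W) ∧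
  (∀ i j, 1 ≤ i → i < n → 1 ≤ j → j ≤ n → |X i j - X (i + 1) j| ≤ W)

/-!
Moving each of `i, k, j` by less than `Δ` changes `A i k + B k j` by at most `4ΔW`. Hence
`C i j ≤ C i' j' + 4ΔW ≤ tildeC i' j' + 4ΔW`, the last step because `tildeC` minimises over fewer
`k`; conversely `tildeC i' j' ≤ C i j + 4ΔW`, by rounding a minimising `k` for `(i, j)` up to the
next multiple of `Δ`, which is still `≤ n` as `Δ ∣ n`. Chaining these comparisons with the `4ΔW`
one between the triples `(i, k, j)` and `(i', k', j')` gives both implications.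
-/

-- For a block corner `i' ∈ {Δ, 2Δ, …, n}`, `BlockNear n Δ i i'` says exactly `i ∈ I(i')`.
def BlockNear (n Δ i i' : ℕ) : Prop :=
  1 ≤ i ∧ i ≤ i' ∧ i' < i + Δ ∧ i' ≤ n

lemma abs_sub_le_mul_of_abs_sub_succ_le {f : ℕ → ℤ} {W : ℤ} {a b : ℕ} (hab : a ≤ b)
    (h : ∀ m, a ≤ m → m < b → |f m - f (m + 1)| ≤ W) :
    |f a - f b| ≤ ((b - a : ℕ) : ℤ) * W := by
  induction b, hab using Nat.le_induction with
  | base => simp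
  | succ b hab ih =>
    calc |f a - f (b + 1)| ≤ |f a - f b| + |f b - f (b + 1)| := abs_sub_le _ _ _
      _ ≤ ((b - a : ℕ) : ℤ) * W + W :=
          add_le_add (ih fun m h₁ h₂ => h m h₁ (by omega)) (h b hab (by omega))
      _ = ((b + 1 - a : ℕ) : ℤ) * W := by rw [Nat.sub_add_comm hab]; push_cast; ring

namespace BoundedDiff

variable {n : ℕ} {W : ℤ} {X : ℕ → ℕ → ℤ}

lemma abs_sub_le (hX : BoundedDiff n W X) {i i' j j' : ℕ}
    (hi : 1 ≤ i) (hii' : i ≤ i') (hi' : i' ≤ n) (hj : 1 ≤ j) (hjj' : j ≤ j') (hj' : j' ≤ n) :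
    |X i j - X i' j'| ≤ ((i' - i : ℕ) : ℤ) * W + ((j' - j : ℕ) : ℤ) * W := by
  have hcol : |X i j - X i' j| ≤ ((i' - i : ℕ) : ℤ) * W :=
    abs_sub_le_mul_of_abs_sub_succ_le (f := fun r => X r j) hii'
      fun m h₁ h₂ => hX.2 m j (by omega) (by omega) hj (by omega)
  have hrow : |X i' j - X i' j'| ≤ ((j' - j : ℕ) : ℤ) * W :=
    abs_sub_le_mul_of_abs_sub_succ_le (f := X i') hjj'
      fun m h₁ h₂ => hX.1 i' m (by omega) hi' (by omega) (by omega)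
  exact (_root_.abs_sub_le _ _ _).trans (add_le_add hcol hrow)

lemma abs_sub_le_of_blockNear (hX : BoundedDiff n W X) (hW : 0 ≤ W) {Δ i i' j j' : ℕ}
    (hi : BlockNear n Δ i i') (hj : BlockNear n Δ j j') :
    |X i j - X i' j'| ≤ 2 * Δ * W := by
  obtain ⟨hi₁, hii', hi'Δ, hi'n⟩ := hi
  obtain ⟨hj₁, hjj', hj'Δ, hj'n⟩ := hj
  have hdi : ((i' - i : ℕ) : ℤ) ≤ Δ := by omega
  have hdj : ((j' - j : ℕ) : ℤ) ≤ Δ := by omega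
  calc |X i j - X i' j'| ≤ ((i' - i : ℕ) : ℤ) * W + ((j' - j : ℕ) : ℤ) * W :=
        hX.abs_sub_le hi₁ hii' hi'n hj₁ hjj' hj'n
    _ ≤ Δ * W + Δ * W := by gcongr
    _ = 2 * Δ * W := by ring

end BoundedDiff

section MinPlus

variable {n Δ : ℕ} {W : ℤ} {A B : ℕ → ℕ → ℤ}

lemma abs_path_sub_le_of_blockNear (hA : BoundedDiff n W A) (hB : BoundedDiff n W B)
    (hW : 0 ≤ W) {i i' k k' j j' : ℕ} (hi : BlockNear n Δ i i') (hk : BlockNear n Δ k k')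
    (hj : BlockNear n Δ j j') :
    |A i k + B k j - (A i' k' + B k' j')| ≤ 4 * Δ * W := by
  have hA' := hA.abs_sub_le_of_blockNear hW hi hk
  have hB' := hB.abs_sub_le_of_blockNear hW hk hj
  calc |A i k + B k j - (A i' k' + B k' j')|
        = |(A i k - A i' k') + (B k j - B k' j')| := by ring_nf
    _ ≤ |A i k - A i' k'| + |B k j - B k' j'| := abs_add_le _ _
    _ ≤ 4 * Δ * W := by linarith

lemma minplus_le (hn : 1 ≤ n) {i k j : ℕ} (hk : 1 ≤ k) (hkn : k ≤ n) :
    minplus n hn A B i j ≤ A i k + B k j :=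
  Finset.inf'_le _ (Finset.mem_Icc.mpr ⟨hk, hkn⟩)

lemma exists_minplus_eq (hn : 1 ≤ n) (i j : ℕ) :
    ∃ k, 1 ≤ k ∧ k ≤ n ∧ minplus n hn A B i j = A i k + B k j := by
  obtain ⟨k, hk, hmin⟩ := Finset.exists_mem_eq_inf' (Finset.nonempty_Icc.mpr hn)
    (fun k => A i k + B k j)
  exact ⟨k, (Finset.mem_Icc.mp hk).1, (Finset.mem_Icc.mp hk).2, hmin⟩

lemma minplus_le_inf'_of_subset (hn : 1 ≤ n) {s : Finset ℕ} (hs : s ⊆ Finset.Icc 1 n)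
    (hne : s.Nonempty) (i j : ℕ) :
    minplus n hn A B i j ≤ s.inf' hne (fun k => A i k + B k j) :=
  Finset.inf'_mono _ hs hne

lemma minplus_le_minplus_add_of_blockNear (hn : 1 ≤ n) (hA : BoundedDiff n W A)
    (hB : BoundedDiff n W B) (hW : 0 ≤ W) (hΔ : 0 < Δ) {i i' j j' : ℕ}
    (hi : BlockNear n Δ i i') (hj : BlockNear n Δ j j') :
    minplus n hn A B i j ≤ minplus n hn A B i' j' + 4 * Δ * W := by
  obtain ⟨k, hk, hkn, hmin⟩ := exists_minplus_eq (A := A) (B := B) hn i' j'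
  have hkk : BlockNear n Δ k k := ⟨hk, le_rfl, by omega, hkn⟩
  have hpath := abs_path_sub_le_of_blockNear hA hB hW hi hkk hj
  have hle := minplus_le (A := A) (B := B) (i := i) (j := j) hn hk hkn
  rw [abs_le] at hpath
  linarith

lemma exists_dvd_blockNear (hΔ : 0 < Δ) (hdvd : Δ ∣ n) {k : ℕ} (hk : 1 ≤ k) (hkn : k ≤ n) :
    ∃ m, Δ ∣ m ∧ BlockNear n Δ k m := by
  obtain ⟨q, rfl⟩ := hdvd
  refine ⟨((k - 1) / Δ + 1) * Δ, Dvd.intro_left _ rfl, hk, ?_, ?_, ?_⟩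
  · have := Nat.lt_div_mul_add (a := k - 1) hΔ
    rw [add_mul, one_mul]
    omega
  · have := Nat.div_mul_le_self (k - 1) Δ
    rw [add_mul, one_mul]
    omega
  · have hq : (k - 1) / Δ < q := (Nat.div_lt_iff_lt_mul hΔ).mpr (by rw [mul_comm]; omega)
    rw [mul_comm Δ q]
    exact Nat.mul_le_mul_right Δ hq

lemma inf'_dvd_le_minplus_add_of_blockNear (hn : 1 ≤ n) (hA : BoundedDiff n W A)
    (hB : BoundedDiff n W B) (hW : 0 ≤ W) (hΔ : 0 < Δ) (hdvd : Δ ∣ n)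
    (hne : ((Finset.Icc 1 n).filter (fun k => Δ ∣ k)).Nonempty) {i i' j j' : ℕ}
    (hi : BlockNear n Δ i i') (hj : BlockNear n Δ j j') :
    ((Finset.Icc 1 n).filter (fun k => Δ ∣ k)).inf' hne (fun k => A i' k + B k j') ≤
      minplus n hn A B i j + 4 * Δ * W := by
  obtain ⟨k, hk, hkn, hmin⟩ := exists_minplus_eq (A := A) (B := B) hn i j
  obtain ⟨m, hdm, hkm⟩ := exists_dvd_blockNear hΔ hdvd hk hkn
  have hm : m ∈ (Finset.Icc 1 n).filter (fun k => Δ ∣ k) :=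
    Finset.mem_filter.mpr ⟨Finset.mem_Icc.mpr ⟨by have := hkm.2.1; omega, hkm.2.2.2⟩, hdm⟩
  have hpath := abs_path_sub_le_of_blockNear hA hB hW hi hkm hj
  have hle := Finset.inf'_le (fun k => A i' k + B k j') hm
  rw [abs_le] at hpath
  linarith

end MinPlus

theorem relevance_relations_general (n Δ : ℕ) (hn : 1 ≤ n) (hdvd : Δ ∣ n)
    (W : ℤ) (hW : 0 ≤ W) (A B : ℕ → ℕ → ℤ)
    (hA : BoundedDiff n W A) (hB : BoundedDiff n W B)
    (hmul : ((Finset.Icc 1 n).filter (fun k => Δ ∣ k)).Nonempty)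
    (tC : ℕ → ℕ → ℤ)
    (htC : ∀ i' j', Δ ∣ i' → Δ ∣ j' → 1 ≤ i' → i' ≤ n → 1 ≤ j' → j' ≤ n →
      tC i' j' = ((Finset.Icc 1 n).filter (fun k => Δ ∣ k)).inf' hmul
        (fun k' => A i' k' + B k' j')) :
    ∀ i' k' j', Δ ∣ i' → Δ ∣ k' → Δ ∣ j' →
      1 ≤ i' → i' ≤ n → 1 ≤ k' → k' ≤ n → 1 ≤ j' → j' ≤ n →
      ∀ i k j, i' - Δ < i → i ≤ i' → k' - Δ < k → k ≤ k' → j' - Δ < j → j ≤ j' →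
        (A i k + B k j = minplus n hn A B i j →
          |A i' k' + B k' j' - tC i' j'| ≤ 8 * (Δ : ℤ) * W) ∧
        (|A i' k' + B k' j' - tC i' j'| ≤ 8 * (Δ : ℤ) * W →
          |A i k + B k j - minplus n hn A B i j| ≤ 16 * (Δ : ℤ) * W) := by
  intro i' k' j' hi'Δ hk'Δ hj'Δ hi' hi'n hk' hk'n hj' hj'n i k j hi hii' hk hkk' hj hjj'
  have hΔ : 0 < Δ := Nat.pos_of_dvd_of_pos hi'Δ hi'
  have hiN : BlockNear n Δ i i' := ⟨by omega, hii', by omega, hi'n⟩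
  have hkN : BlockNear n Δ k k' := ⟨by omega, hkk', by omega, hk'n⟩
  have hjN : BlockNear n Δ j j' := ⟨by omega, hjj', by omega, hj'n⟩
  have hpath := abs_le.mp (abs_path_sub_le_of_blockNear hA hB hW hiN hkN hjN)
  have htC' := htC i' j' hi'Δ hj'Δ hi' hi'n hj' hj'n
  have hC_le_path : minplus n hn A B i j ≤ A i k + B k j := minplus_le hn hkN.1 (by omega)
  have htC_le_path : tC i' j' ≤ A i' k' + B k' j' := by
    rw [htC']
    exact Finset.inf'_le _ (Finset.mem_filter.mpr ⟨Finset.mem_Icc.mpr ⟨hk', hk'n⟩, hk'Δ⟩)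
  have hC'_le_tC : minplus n hn A B i' j' ≤ tC i' j' := by
    rw [htC']
    exact minplus_le_inf'_of_subset hn (Finset.filter_subset _ _) hmul i' j'
  have hC_le_C' := minplus_le_minplus_add_of_blockNear hn hA hB hW hΔ hiN hjN
  have htC_le_C : tC i' j' ≤ minplus n hn A B i j + 4 * Δ * W := by
    rw [htC']
    exact inf'_dvd_le_minplus_add_of_blockNear hn hA hB hW hΔ hdvd hmul hiN hjN
  refine ⟨fun hstrong => abs_le.mpr ⟨by linarith, by linarith⟩, fun happrox => ?_⟩
  obtain ⟨happrox_lo, happrox_hi⟩ := abs_le.mp happrox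
  exact abs_le.mpr ⟨by linarith, by linarith⟩

/-- For `W`-BD matrices `A, B`, `C = A ⋆ B`, `Δ ∣ n`, and the block approximation
`tildeC_{i',j'} = min{A_{i',k'} + B_{k',j'} : k' ∈ {Δ,…,n} multiple of Δ}`:
for all block corners `i', k', j'` and all `(i,k,j) ∈ I(i') × I(k') × I(j')`,
(a) strongly relevant (`A_{i,k} + B_{k,j} = C_{i,j}`) implies approximately relevant
(`|A_{i',k'} + B_{k',j'} - tildeC_{i',j'}| ≤ 8ΔW`), and
(b) approximately relevant implies weakly relevant
(`|A_{i,k} + B_{k,j} - C_{i,j}| ≤ 16ΔW`). -/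
theorem relevance_relations (n Δ : ℕ) (hn : 1 ≤ n) (hΔ : 1 ≤ Δ) (hdvd : Δ ∣ n)
    (W : ℤ) (hW : 0 ≤ W) (A B : ℕ → ℕ → ℤ)
    (hA : BoundedDiff n W A) (hB : BoundedDiff n W B)
    (hmul : ((Finset.Icc 1 n).filter (fun k => Δ ∣ k)).Nonempty)
    (tC : ℕ → ℕ → ℤ)
    (htC : ∀ i' j', Δ ∣ i' → Δ ∣ j' → 1 ≤ i' → i' ≤ n → 1 ≤ j' → j' ≤ n →
      tC i' j' = ((Finset.Icc 1 n).filter (fun k => Δ ∣ k)).inf' hmul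
        (fun k' => A i' k' + B k' j')) :
    ∀ i' k' j', Δ ∣ i' → Δ ∣ k' → Δ ∣ j' →
      1 ≤ i' → i' ≤ n → 1 ≤ k' → k' ≤ n → 1 ≤ j' → j' ≤ n →
      ∀ i k j, i' - Δ < i → i ≤ i' → k' - Δ < k → k ≤ k' → j' - Δ < j → j ≤ j' →
        (A i k + B k j = minplus n hn A B i j →
          |A i' k' + B k' j' - tC i' j'| ≤ 8 * (Δ : ℤ) * W) ∧
        (|A i' k' + B k' j' - tC i' j'| ≤ 8 * (Δ : ℤ) * W →
          |A i k + B k j - minplus n hn A B i j| ≤ 16 * (Δ : ℤ) * W) :=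
  relevance_relations_general n Δ hn hdvd W hW A B hA hB hmul tC htC
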